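/- arXiv:2112.09416 — 5 statements merged into one kernel-verified Lean document; each statement's English description precedes it below -/
import Mathlib

section
/- Let B be a complete Boolean algebra and M a B-valued model for a relational ω-signature that has the mixing property. Then M is full for first-order logic: for every first-order formula φ(v, w̄) and every tuple m̄ ∈ M^{|w̄|} there exists c ∈ M such that ⟦∃v φ(v, m̄)⟧ = ⟦φ(c, m̄)⟧. -/
/-- A Boolean valued model for a relational signature `Rsym` (the `n`-ary
relation symbols are the elements of `Rsym n`), with domain `M` and values in
the Boolean algebra `B`. -/
structure BVModel (B : Type*) [BooleanAlgebra B] (M : Type*) (Rsym : ℕ → Type*) where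
  /-- the Boolean value of equality -/
  eq : M → M → B
  refl : ∀ τ, eq τ τ = ⊤
  symm : ∀ τ σ, eq τ σ = eq σ τ
  trans : ∀ τ σ π, eq τ σ ⊓ eq σ π ≤ eq τ π
  /-- the interpretation of the relation symbols -/
  rel : ∀ {n : ℕ}, Rsym n → (Fin n → M) → B
  subst : ∀ {n : ℕ} (r : Rsym n) (τ σ : Fin n → M),
      (Finset.univ.inf fun i => eq (τ i) (σ i)) ⊓ rel r τ ≤ rel r σ

/-- First-order formulas for a relational signature, in a context of `n` free
variables; connectives `¬`, `∧` and the quantifier `∃` (binding variable `0`). -/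
inductive Fml0 (Rsym : ℕ → Type*) : ℕ → Type _
  | eq {n : ℕ} : Fin n → Fin n → Fml0 Rsym n
  | rel {n k : ℕ} : Rsym k → (Fin k → Fin n) → Fml0 Rsym n
  | not {n : ℕ} : Fml0 Rsym n → Fml0 Rsym n
  | and {n : ℕ} : Fml0 Rsym n → Fml0 Rsym n → Fml0 Rsym n
  | ex {n : ℕ} : Fml0 Rsym (n + 1) → Fml0 Rsym n

/-- The Boolean value of a first-order formula under an assignment of the free
variables: `¬` is complement, `∧` is meet, `∃` is the supremum over the domain. -/
def BVModel.val0 {B : Type*} [CompleteBooleanAlgebra B] {M : Type*} {Rsym : ℕ → Type*}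
    (M0 : BVModel B M Rsym) : {n : ℕ} → Fml0 Rsym n → (Fin n → M) → B
  | _, .eq i j, v => M0.eq (v i) (v j)
  | _, .rel r f, v => M0.rel r (v ∘ f)
  | _, .not φ, v => (M0.val0 φ v)ᶜ
  | _, .and φ ψ, v => M0.val0 φ v ⊓ M0.val0 ψ v
  | _, .ex φ, v => ⨆ a : M, M0.val0 φ (Fin.cons a v)

/-- `M0` has the mixing property. -/
def BVModel.HasMixing {B : Type*} [BooleanAlgebra B] {M : Type*} {Rsym : ℕ → Type*}
    (M0 : BVModel B M Rsym) : Prop :=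
  ∀ A : Set B, (∀ a ∈ A, ∀ b ∈ A, a ≠ b → a ⊓ b = ⊥) →
    ∀ τ : A → M, ∃ τ0 : M, ∀ a : A, (a : B) ≤ M0.eq τ0 (τ a)

private lemma BVModel.val0_subst' {B : Type*} [CompleteBooleanAlgebra B] {M : Type*}
    {Rsym : ℕ → Type*} (M0 : BVModel B M Rsym) :
    ∀ {n : ℕ} (φ : Fml0 Rsym n) (v w : Fin n → M),
      (Finset.univ.inf fun i => M0.eq (v i) (w i)) ⊓ M0.val0 φ v ≤ M0.val0 φ w := by
  intro n φ
  induction φ with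
  | eq i j =>
    intro v w
    have h1 : (Finset.univ.inf fun i => M0.eq (v i) (w i)) ≤ M0.eq (v i) (w i) :=
      Finset.inf_le (Finset.mem_univ i)
    have h2 : (Finset.univ.inf fun i => M0.eq (v i) (w i)) ≤ M0.eq (v j) (w j) :=
      Finset.inf_le (Finset.mem_univ j)
    simp only [BVModel.val0]
    calc (Finset.univ.inf fun i => M0.eq (v i) (w i)) ⊓ M0.eq (v i) (v j)
        ≤ (M0.eq (w i) (v i) ⊓ M0.eq (v i) (v j)) ⊓ M0.eq (v j) (w j) := by
          rw [M0.symm (w i)]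
          exact le_inf (inf_le_inf_right _ h1) (le_trans inf_le_left h2)
      _ ≤ M0.eq (w i) (v j) ⊓ M0.eq (v j) (w j) :=
          inf_le_inf_right _ (M0.trans _ _ _)
      _ ≤ M0.eq (w i) (w j) := M0.trans _ _ _
  | rel r f =>
    intro v w
    simp only [BVModel.val0]
    refine le_trans (inf_le_inf_right _ ?_) (M0.subst r (v ∘ f) (w ∘ f))
    exact Finset.le_inf fun i _ => Finset.inf_le (Finset.mem_univ (f i))
  | not φ ih =>
    intro v w
    simp only [BVModel.val0]
    have he : (Finset.univ.inf fun i => M0.eq (v i) (w i))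
        = Finset.univ.inf fun i => M0.eq (w i) (v i) := by
      simp_rw [M0.symm]
    refine le_compl_iff_disjoint_right.mpr (disjoint_iff_inf_le.mpr ?_)
    calc ((Finset.univ.inf fun i => M0.eq (v i) (w i)) ⊓ (M0.val0 φ v)ᶜ) ⊓ M0.val0 φ w
        ≤ M0.val0 φ v ⊓ (M0.val0 φ v)ᶜ := by
          rw [inf_right_comm, he]
          exact inf_le_inf_right _ (ih w v)
      _ ≤ ⊥ := by rw [inf_compl_eq_bot]
  | and φ ψ ihφ ihψ =>
    intro v w
    simp only [BVModel.val0]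
    refine le_inf (le_trans ?_ (ihφ v w)) (le_trans ?_ (ihψ v w))
    · exact inf_le_inf_left _ inf_le_left
    · exact inf_le_inf_left _ inf_le_right
  | ex φ ih =>
    intro v w
    simp only [BVModel.val0, inf_iSup_eq]
    refine iSup_le fun a => le_trans ?_ (le_iSup _ a)
    refine le_trans (inf_le_inf_right _ ?_) (ih (Fin.cons a v) (Fin.cons a w))
    refine Finset.le_inf fun i _ => ?_
    refine Fin.cases ?_ (fun j => ?_) i
    · simp [M0.refl]
    · simpa using Finset.inf_le (Finset.mem_univ j)

private lemma BVModel.val0_subst_cons {B : Type*} [CompleteBooleanAlgebra B] {M : Type*}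
    {Rsym : ℕ → Type*} (M0 : BVModel B M Rsym) {n : ℕ} (φ : Fml0 Rsym (n + 1))
    (v : Fin n → M) (a b : M) :
    M0.eq a b ⊓ M0.val0 φ (Fin.cons a v) ≤ M0.val0 φ (Fin.cons b v) := by
  refine le_trans (inf_le_inf_right _ ?_) (M0.val0_subst' φ (Fin.cons a v) (Fin.cons b v))
  refine Finset.le_inf fun i _ => ?_
  refine Fin.cases ?_ (fun j => ?_) i
  · simp
  · simp [M0.refl]


/-- A Boolean valued model with the mixing property is full for first-order
logic: every existential Boolean value is attained by a witness. -/
theorem BVModel.full_of_mixing {B : Type*} [CompleteBooleanAlgebra B] {M : Type*}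
    {Rsym : ℕ → Type*} (M0 : BVModel B M Rsym) (hmix : M0.HasMixing) :
    ∀ (n : ℕ) (φ : Fml0 Rsym (n + 1)) (v : Fin n → M),
      ∃ c : M, (⨆ a : M, M0.val0 φ (Fin.cons a v)) = M0.val0 φ (Fin.cons c v) := by

  intro n φ v
  set f : M → B := fun a => M0.val0 φ (Fin.cons a v) with hf
  -- the collection of antichains of nonzero elements below some f a
  set S : Set (Set B) := {A | (∀ b ∈ A, b ≠ ⊥ ∧ ∃ a, b ≤ f a) ∧
    A.Pairwise fun x y => x ⊓ y = ⊥} with hS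
  obtain ⟨A, hA⟩ : ∃ A, Maximal (· ∈ S) A := by
    apply zorn_subset
    intro c hc hchain
    refine ⟨⋃₀ c, ⟨?_, ?_⟩, fun s hs => Set.subset_sUnion_of_mem hs⟩
    · rintro b ⟨t, ht, hbt⟩
      exact (hc ht).1 b hbt
    · rintro x ⟨t, ht, hxt⟩ y ⟨u, hu, hyu⟩ hxy
      rcases hchain.total ht hu with h | h
      · exact (hc hu).2 (h hxt) hyu hxy
      · exact (hc ht).2 hxt (h hyu) hxy
  have hAS := hA.1
  -- every f a is below sSup A
  have hcover : ∀ a, f a ≤ sSup A := by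
    intro a
    by_contra hnot
    set b : B := f a ⊓ (sSup A)ᶜ with hb
    have hbne : b ≠ ⊥ := by
      intro h
      apply hnot
      rw [← sdiff_eq_bot_iff, sdiff_eq]
      exact h
    have hbdisj : ∀ x ∈ A, x ⊓ b = ⊥ := by
      intro x hx
      have h1 : x ⊓ b ≤ sSup A ⊓ (sSup A)ᶜ :=
        inf_le_inf (le_sSup hx) inf_le_right
      simpa using le_bot_iff.mp (by simpa using h1)
    have hmem : insert b A ∈ S := by
      constructor
      · rintro x (rfl | hx)
        · exact ⟨hbne, a, inf_le_left⟩
        · exact hA.1.1 x hx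
      · rintro x (rfl | hx) y (rfl | hy) hxy
        · exact absurd rfl hxy
        · rw [inf_comm]; exact hbdisj y hy
        · exact hbdisj x hx
        · exact hA.1.2 hx hy hxy
    have hbA : b ∈ A := hA.2 hmem (Set.subset_insert b A) (Set.mem_insert b A)
    have : b ≤ sSup A ⊓ (sSup A)ᶜ := le_inf (le_sSup hbA) inf_le_right
    exact hbne (le_bot_iff.mp (by simpa using this))
  -- mix the witnesses
  have hpw : ∀ x ∈ A, ∀ y ∈ A, x ≠ y → x ⊓ y = ⊥ := fun x hx y hy => hA.1.2 hx hy
  set τ : A → M := fun x => Classical.choose (hA.1.1 x x.2).2 with hτ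
  have hτ' : ∀ x : A, (x : B) ≤ f (τ x) := fun x => Classical.choose_spec (hA.1.1 x x.2).2
  obtain ⟨c, hc⟩ := hmix A hpw τ
  refine ⟨c, le_antisymm (iSup_le fun a => (hcover a).trans (sSup_le ?_)) (le_iSup f c)⟩
  intro x hx
  have h1 : x ≤ M0.eq (τ ⟨x, hx⟩) c ⊓ f (τ ⟨x, hx⟩) := by
    rw [M0.symm]
    exact le_inf (hc ⟨x, hx⟩) (hτ' ⟨x, hx⟩)
  exact h1.trans (M0.val0_subst_cons φ v _ c)
end

section
/- (Łoś theorem for Boolean valued models) Let B be a complete Boolean algebra, M a full B-valued model for a relational ω-signature, and U ⊂ B an ultrafilter. Then for every first-order formula φ(v₁,…,vₙ) and all τ₁,…,τₙ ∈ M: the Tarski quotient structure M/U satisfies φ([τ₁]_U,…,[τₙ]_U) if and only if ⟦φ(τ₁,…,τₙ)⟧ ∈ U. -/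
/-- The equivalence `τ ≡ σ iff ⟦τ=σ⟧ ∈ U` used to form the quotient `M/U`. -/
def BVModel.urel {B : Type*} [BooleanAlgebra B] {M : Type*} {Rsym : ℕ → Type*}
    (M0 : BVModel B M Rsym) (U : Set B) : M → M → Prop :=
  fun τ σ => M0.eq τ σ ∈ U

/-- Tarski satisfaction in the quotient structure `M/U`: equality is genuine
equality of classes, and a relation symbol holds of classes iff it has value in
`U` on some (equivalently, by well-definedness, any) representatives. -/
def BVModel.qsat {B : Type*} [BooleanAlgebra B] {M : Type*} {Rsym : ℕ → Type*}
    (M0 : BVModel B M Rsym) (U : Set B) :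
    {n : ℕ} → Fml0 Rsym n → (Fin n → Quot (M0.urel U)) → Prop
  | _, .eq i j, v => v i = v j
  | _, .rel r f, v => ∃ τ : Fin _ → M,
      (∀ k, Quot.mk (M0.urel U) (τ k) = v (f k)) ∧ M0.rel r τ ∈ U
  | _, .not φ, v => ¬ M0.qsat U φ v
  | _, .and φ ψ, v => M0.qsat U φ v ∧ M0.qsat U ψ v
  | _, .ex φ, v => ∃ a : Quot (M0.urel U), M0.qsat U φ (Fin.cons a v)

/-- Łoś theorem for Boolean valued models: if `M0` is full and `U` is an
ultrafilter on the complete Boolean algebra `B`, then the Tarski quotient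
structure `M/U` satisfies `φ([τ₁],…,[τₙ])` iff `⟦φ(τ₁,…,τₙ)⟧ ∈ U`. -/
theorem BVModel.los {B : Type*} [CompleteBooleanAlgebra B] {M : Type*}
    {Rsym : ℕ → Type*} (M0 : BVModel B M Rsym) (U : Set B)
    (hU_up : ∀ a b : B, a ∈ U → a ≤ b → b ∈ U)
    (hU_inf : ∀ a b : B, a ∈ U → b ∈ U → a ⊓ b ∈ U)
    (hU_ultra : ∀ b : B, b ∈ U ↔ bᶜ ∉ U)
    (hfull : ∀ (n : ℕ) (φ : Fml0 Rsym (n + 1)) (v : Fin n → M),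
      ∃ c : M, (⨆ a : M, M0.val0 φ (Fin.cons a v)) = M0.val0 φ (Fin.cons c v)) :
    ∀ (n : ℕ) (φ : Fml0 Rsym n) (τ : Fin n → M),
      M0.qsat U φ (fun i => Quot.mk (M0.urel U) (τ i)) ↔ M0.val0 φ τ ∈ U := by
  have hTop : (⊤ : B) ∈ U := by
    by_contra h
    have hbot : (⊥ : B) ∈ U := by
      rw [hU_ultra]; simpa using h
    exact h (hU_up _ _ hbot le_top)
  have hnot : ∀ b : B, bᶜ ∈ U ↔ b ∉ U := by
    intro b
    rw [hU_ultra bᶜ, compl_compl]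
  have hequiv : Equivalence (M0.urel U) := by
    constructor
    · intro x; unfold BVModel.urel; rw [M0.refl]; exact hTop
    · intro x y h; unfold BVModel.urel at *; rwa [M0.symm]
    · intro x y z hxy hyz
      exact hU_up _ _ (hU_inf _ _ hxy hyz) (M0.trans x y z)
  have hmk : ∀ x y : M, Quot.mk (M0.urel U) x = Quot.mk (M0.urel U) y ↔ M0.eq x y ∈ U :=
    fun x y => hequiv.quot_mk_eq_iff x y
  have hinf : ∀ {k : ℕ} (f : Fin k → B), (∀ i, f i ∈ U) →
      (Finset.univ.inf f) ∈ U := by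
    intro k
    induction k with
    | zero => intro f _; simpa using hTop
    | succ k ih =>
      intro f hf
      rw [Fin.univ_succ, Finset.inf_cons, Finset.inf_map]
      exact hU_inf _ _ (hf 0) (ih _ (fun i => hf _))
  intro n φ
  induction φ with
  | eq i j =>
    intro τ
    simpa [BVModel.qsat, BVModel.val0] using hmk (τ i) (τ j)
  | rel r f =>
    intro τ
    constructor
    · rintro ⟨σ, hσ, hrel⟩
      have h1 : (Finset.univ.inf fun i => M0.eq (σ i) (τ (f i))) ∈ U :=
        hinf _ (fun i => (hmk _ _).1 (hσ i))
      exact hU_up _ _ (hU_inf _ _ h1 hrel) (M0.subst r σ (τ ∘ f))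
    · intro h
      exact ⟨τ ∘ f, fun k => rfl, h⟩
  | not φ ih =>
    intro τ
    simp only [BVModel.qsat, BVModel.val0, ih τ]
    exact (hnot _).symm
  | and φ ψ ihφ ihψ =>
    intro τ
    simp only [BVModel.qsat, BVModel.val0, ihφ τ, ihψ τ]
    exact ⟨fun ⟨h1, h2⟩ => hU_inf _ _ h1 h2,
      fun h => ⟨hU_up _ _ h inf_le_left, hU_up _ _ h inf_le_right⟩⟩
  | ex φ ih =>
    intro τ
    simp only [BVModel.qsat, BVModel.val0]
    have key : ∀ c : M,
        (Fin.cons (Quot.mk (M0.urel U) c) (fun i => Quot.mk (M0.urel U) (τ i)))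
          = fun i => Quot.mk (M0.urel U) ((Fin.cons c τ : Fin _ → M) i) := by
      intro c; funext i
      refine Fin.cases ?_ ?_ i <;> simp
    constructor
    · rintro ⟨a, ha⟩
      obtain ⟨c, rfl⟩ := Quot.exists_rep a
      rw [key c] at ha
      exact hU_up _ _ ((ih (Fin.cons c τ)).1 ha) (le_iSup (fun a => M0.val0 φ (Fin.cons a τ)) c)
    · intro h
      obtain ⟨c, hc⟩ := hfull _ φ τ
      refine ⟨Quot.mk _ c, ?_⟩
      rw [key c]
      exact (ih (Fin.cons c τ)).2 (by rw [← hc]; exact h)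
end

section
/- Let S be a consistency property for L(C)_{∞∞} consisting of finite sets, and F a maximal filter on P_S. Let Σ'_F ⊆ Σ_F be the set of quantifier-free sentences ψ ∈ Σ_F such that every subformula of ψ that is not atomic or negated-atomic has ⋀ as its only logical constant. Then the term structure A_F satisfies every sentence in Σ'_F. -/
/-- Infinitary relational formulas over constants `C` (de Bruijn via `Option`). -/
inductive Fml (R : ℕ → Type) : Type → Type 1
  | eq {C : Type} : C → C → Fml R C
  | rel {C : Type} {n : ℕ} : R n → (Fin n → C) → Fml R C
  | neg {C : Type} : Fml R C → Fml R C
  | conj {C ι : Type} : (ι → Fml R C) → Fml R C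
  | disj {C ι : Type} : (ι → Fml R C) → Fml R C
  | all {C : Type} : Fml R (Option C) → Fml R C
  | ex {C : Type} : Fml R (Option C) → Fml R C

namespace Fml
variable {R : ℕ → Type}

def rename : {C D : Type} → (C → D) → Fml R C → Fml R D
  | _, _, f, .eq a b => .eq (f a) (f b)
  | _, _, f, .rel r v => .rel r (f ∘ v)
  | _, _, f, .neg φ => .neg (rename f φ)
  | _, _, f, .conj g => .conj fun i => rename f (g i)
  | _, _, f, .disj g => .disj fun i => rename f (g i)
  | _, _, f, .all φ => .all (rename (Option.map f) φ)
  | _, _, f, .ex φ => .ex (rename (Option.map f) φ)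

/-- Substitute the constant `c` for the outermost bound variable. -/
def subst {C : Type} (φ : Fml R (Option C)) (c : C) : Fml R C :=
  rename (fun o => o.getD c) φ

/-- The constant `c` occurs in the formula `φ`. -/
def occurs : {C : Type} → C → Fml R C → Prop
  | _, c, .eq a b => a = c ∨ b = c
  | _, c, .rel _ v => ∃ i, v i = c
  | _, c, .neg φ => occurs c φ
  | _, c, .conj g => ∃ i, occurs c (g i)
  | _, c, .disj g => ∃ i, occurs c (g i)
  | _, c, .all φ => occurs (some c) φ
  | _, c, .ex φ => occurs (some c) φ

/-- Moving a negation inside one step: `φ¬`. -/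
def mvneg : {C : Type} → Fml R C → Fml R C
  | _, .neg φ => φ
  | _, .conj g => .disj fun i => .neg (g i)
  | _, .disj g => .conj fun i => .neg (g i)
  | _, .all φ => .ex (.neg φ)
  | _, .ex φ => .all (.neg φ)
  | _, φ => .neg φ

end Fml

/-- Consistency property clauses; `Cs` is the set of "fresh" constants. -/
def IsConsProp {R : ℕ → Type} {E : Type} (Cs : Set E) (S : Set (Set (Fml R E))) : Prop :=
  (∀ s ∈ S, ∀ φ : Fml R E, ¬(φ ∈ s ∧ Fml.neg φ ∈ s)) ∧
  (∀ s ∈ S, ∀ φ : Fml R E, Fml.neg φ ∈ s → insert (Fml.mvneg φ) s ∈ S) ∧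
  (∀ s ∈ S, ∀ (ι : Type) (g : ι → Fml R E), Fml.conj g ∈ s → ∀ i, insert (g i) s ∈ S) ∧
  (∀ s ∈ S, ∀ φ : Fml R (Option E), Fml.all φ ∈ s → ∀ c : E, insert (Fml.subst φ c) s ∈ S) ∧
  (∀ s ∈ S, ∀ (ι : Type) (g : ι → Fml R E), Fml.disj g ∈ s → ∃ i, insert (g i) s ∈ S) ∧
  (∀ s ∈ S, ∀ φ : Fml R (Option E), Fml.ex φ ∈ s → ∃ c ∈ Cs, insert (Fml.subst φ c) s ∈ S) ∧
  (∀ s ∈ S, ∀ c d : E, Fml.eq c d ∈ s → insert (Fml.eq d c) s ∈ S) ∧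
  (∀ s ∈ S, ∀ c d : E, ∀ φ : Fml R (Option E),
      Fml.eq c d ∈ s → Fml.subst φ d ∈ s → insert (Fml.subst φ c) s ∈ S) ∧
  (∀ s ∈ S, ∀ d : E, ∃ c ∈ Cs, insert (Fml.eq c d) s ∈ S)

/-- The forcing notion associated to a consistency property: the downward
closure of `S` under subsets (ordered by reverse inclusion). -/
def PS {R : ℕ → Type} {E : Type} (S : Set (Set (Fml R E))) : Set (Set (Fml R E)) :=
  {s | ∃ s₀ ∈ S, s ⊆ s₀}

/-- A filter on the forcing notion `P_S` (ordered by reverse inclusion):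
a nonempty family of conditions, closed under subsets lying in `P_S`, and
directed (any two members have a common extension in the family). -/
def IsFilterOn {R : ℕ → Type} {E : Type} (S : Set (Set (Fml R E)))
    (F : Set (Set (Fml R E))) : Prop :=
  F.Nonempty ∧ F ⊆ PS S ∧
  (∀ p ∈ F, ∀ q ∈ PS S, q ⊆ p → q ∈ F) ∧
  (∀ p ∈ F, ∀ q ∈ F, ∃ r ∈ F, p ⊆ r ∧ q ⊆ r)

/-- Quantifier-free sentences all of whose non-atomic, non-negated-atomic
subformulas have `⋀` as their only logical constant. -/
inductive QFConj {R : ℕ → Type} {E : Type} : Fml R E → Prop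
  | eqAtom (c d : E) : QFConj (.eq c d)
  | relAtom {n : ℕ} (r : R n) (v : Fin n → E) : QFConj (.rel r v)
  | negEqAtom (c d : E) : QFConj (.neg (.eq c d))
  | negRelAtom {n : ℕ} (r : R n) (v : Fin n → E) : QFConj (.neg (.rel r v))
  | conj {ι : Type} (g : ι → Fml R E) : (∀ i, QFConj (g i)) → QFConj (.conj g)

/-- Satisfaction of a quantifier-free sentence in the term structure `A_F`
determined by a set `Σ` of sentences: an atomic sentence holds iff it belongs
to `Σ`. (The quantifier clauses are irrelevant here and set to `True`.) -/
def QFSat {R : ℕ → Type} {E : Type} (Sig : Set (Fml R E)) : Fml R E → Prop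
  | .eq c d => Fml.eq c d ∈ Sig
  | .rel r v => Fml.rel r v ∈ Sig
  | .neg φ => ¬ QFSat Sig φ
  | .conj g => ∀ i, QFSat Sig (g i)
  | .disj g => ∃ i, QFSat Sig (g i)
  | .all _ => True
  | .ex _ => True

/-- Every sentence of `Σ'_F` (the quantifier-free members of `Σ_F` whose
non-atomic subformulas only use `⋀`) holds in the term structure `A_F`. -/
theorem term_structure_sat_qfconj {R : ℕ → Type} {E : Type} (Cs : Set E)
    (S : Set (Set (Fml R E))) (hS : IsConsProp Cs S) (hfin : ∀ s ∈ S, s.Finite)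
    (F : Set (Set (Fml R E))) (hF : IsFilterOn S F)
    (hmax : ∀ F' : Set (Set (Fml R E)), IsFilterOn S F' → F ⊆ F' → F' ⊆ F) :
    ∀ ψ ∈ ⋃₀ F, QFConj ψ → QFSat (⋃₀ F) ψ := by
  obtain ⟨hne, hsub, hdown, hdir⟩ := hF
  have hcons : ∀ φ : Fml R E, φ ∈ ⋃₀ F → Fml.neg φ ∈ ⋃₀ F → False := by
    rintro φ ⟨p, hp, hφp⟩ ⟨q, hq, hφq⟩
    obtain ⟨r, hr, hpr, hqr⟩ := hdir p hp q hq
    obtain ⟨s₀, hs₀, hrs₀⟩ := hsub hr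
    exact hS.1 s₀ hs₀ φ ⟨hrs₀ (hpr hφp), hrs₀ (hqr hφq)⟩
  intro ψ hψ h
  revert hψ
  induction h with
  | eqAtom c d => exact fun hψ => hψ
  | relAtom r v => exact fun hψ => hψ
  | negEqAtom c d => exact fun hψ h' => hcons _ h' hψ
  | negRelAtom r v => exact fun hψ h' => hcons _ h' hψ
  | conj g hg ih =>
    intro hψ i
    obtain ⟨p, hp, hgp⟩ := hψ
    set F' : Set (Set (Fml R E)) :=
      {q | q ∈ PS S ∧ ∃ r ∈ F, p ⊆ r ∧ q ⊆ insert (g i) r} with hF'def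
    have hext : ∀ r ∈ F, p ⊆ r → insert (g i) r ∈ PS S := by
      intro r hr hpr
      obtain ⟨s₀, hs₀, hrs₀⟩ := hsub hr
      exact ⟨insert (g i) s₀, hS.2.2.1 s₀ hs₀ _ g (hrs₀ (hpr hgp)) i,
        Set.insert_subset_insert hrs₀⟩
    have hFF' : F ⊆ F' := by
      intro q hq
      obtain ⟨r, hr, hqr, hpr⟩ := hdir q hq p hp
      exact ⟨hsub hq, r, hr, hpr, hqr.trans (Set.subset_insert _ _)⟩
    have hfil : IsFilterOn S F' := by
      refine ⟨hne.mono hFF', fun q hq => hq.1, ?_, ?_⟩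
      · rintro q ⟨hqPS, r, hr, hpr, hqi⟩ q' hq' hq'q
        exact ⟨hq', r, hr, hpr, hq'q.trans hqi⟩
      · rintro q₁ ⟨_, r₁, hr₁, hpr₁, hq₁⟩ q₂ ⟨_, r₂, hr₂, hpr₂, hq₂⟩
        obtain ⟨r, hr, h1, h2⟩ := hdir r₁ hr₁ r₂ hr₂
        exact ⟨insert (g i) r, ⟨hext r hr (hpr₁.trans h1), r, hr, hpr₁.trans h1, subset_rfl⟩,
          hq₁.trans (Set.insert_subset_insert h1), hq₂.trans (Set.insert_subset_insert h2)⟩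
    have hmemF' : insert (g i) p ∈ F' :=
      ⟨hext p hp subset_rfl, p, hp, subset_rfl, subset_rfl⟩
    exact ih i ⟨insert (g i) p, hmax F' hfil hFF' hmemF', Set.mem_insert _ _⟩
end

section
/- (Mansfield's key lemma) Let S be a consistency property, P_S the associated forcing, and B = RO(P_S ↾ s₀) for fixed s₀ ∈ S. For a sentence φ define L(φ) = ⋁{reg(N_t) : φ ∈ t ∈ P_S ↾ s₀} in B, where reg denotes interior-of-closure and N_t = {r : r ≤ t}. If for every t ≤ s we have t ∪ {φ} ∈ S, then N_s ⊆ L(φ), and in particular reg(N_s) ≤ L(φ). -/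
/-- The topology on a set of forcing conditions whose open sets are those
closed under extension (i.e. downward closed in the forcing order). -/
def condTopology (X : Type*) (ext : X → X → Prop) : TopologicalSpace X where
  IsOpen O := ∀ p ∈ O, ∀ q, ext p q → q ∈ O
  isOpen_univ := by intro _ _ _ _; trivial
  isOpen_inter := by
    intro s u hs hu p hp q hq
    exact ⟨hs p hp.1 q hq, hu p hp.2 q hq⟩
  isOpen_sUnion := by
    intro Ss h p hp q hq
    obtain ⟨O, hO, hpO⟩ := hp
    exact ⟨O, hO, h O hO p hpO q hq⟩

/-- Mansfield's key lemma: in the forcing `P_S ↾ s₀` with the downward-closed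
sets topology, if every extension `t` of a condition `s` stays a condition after
adding `φ`, then `N_s ⊆ L(φ) = ⋁{reg (N_t) : φ ∈ t}`; in particular
`reg (N_s) ≤ L(φ)`. -/
theorem mansfield_key_lemma {R : ℕ → Type} {E : Type} (Cs : Set E)
    (S : Set (Set (Fml R E))) (hS : IsConsProp Cs S)
    (s₀ : Set (Fml R E)) (hs₀ : s₀ ∈ S) (φ : Fml R E) :
    let P := {t : Set (Fml R E) // t ∈ PS S ∧ s₀ ⊆ t}
    let τ : TopologicalSpace P := condTopology P (fun p q => p.val ⊆ q.val)
    let N : P → Set P := fun t => {r : P | t.val ⊆ r.val}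
    let reg : Set P → Set P := fun A => @interior P τ (@closure P τ A)
    let L : Fml R E → Set P := fun ψ => reg (⋃ t ∈ {t : P | ψ ∈ t.val}, N t)
    ∀ s : P, (∀ t : P, s.val ⊆ t.val → insert φ t.val ∈ PS S) →
      N s ⊆ L φ ∧ reg (N s) ⊆ L φ := by
  intro P τ N reg L s hs
  letI : TopologicalSpace P := τ
  have hNopen : IsOpen (N s) := fun a ha q hq => ha.trans hq
  set U : Set P := ⋃ t ∈ {t : P | φ ∈ t.val}, N t with hU
  have hNcl : N s ⊆ closure U := by
    intro r hr
    rw [mem_closure_iff]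
    intro O hO hrO
    have hins : insert φ r.val ∈ PS S := hs r hr
    refine ⟨⟨insert φ r.val, hins, fun x hx => Set.mem_insert_of_mem _ (r.2.2 hx)⟩,
      hO r hrO _ (Set.subset_insert _ _), ?_⟩
    exact Set.mem_biUnion (Set.mem_insert _ _) (fun x hx => hx)
  have h1 : N s ⊆ L φ := interior_maximal hNcl hNopen
  refine ⟨h1, ?_⟩
  have h2 : closure (N s) ⊆ closure U :=
    closure_closure (s := U) ▸ closure_mono hNcl
  exact interior_mono h2
end

section
/- Let Γ, Δ be sets of formulas in the infinitary sequent calculus with rules: axiom Γ,φ ⊢ φ,Δ; cut; substitution; weakening; left/right negation; left conjunction (from Γ,Γ' ⊢ Δ infer Γ, ⋀Γ' ⊢ Δ); right conjunction (from Γ ⊢ φᵢ,Δ for all i ∈ I infer Γ ⊢ ⋀{φᵢ},Δ); left/right quantification; and equality rules. Then the calculus is sound for Boolean valued semantics: if Γ ⊢ Δ is derivable, then for every complete Boolean algebra B and every B-valued model M, ⟦⋀Γ⟧_B^M ≤ ⟦⋁Δ⟧_B^M. -/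
/-- The Boolean value of an infinitary sentence in a Boolean valued model,
under an interpretation `ι` of the constants; quantifiers range over the
domain. -/
def BVModel.val {B : Type*} [CompleteBooleanAlgebra B] {M : Type*} {Rsym : ℕ → Type}
    (M0 : BVModel B M Rsym) : {C : Type} → Fml Rsym C → (C → M) → B
  | _, .eq a b, ι => M0.eq (ι a) (ι b)
  | _, .rel r v, ι => M0.rel r (ι ∘ v)
  | _, .neg φ, ι => (M0.val φ ι)ᶜ
  | _, .conj g, ι => ⨅ i, M0.val (g i) ι
  | _, .disj g, ι => ⨆ i, M0.val (g i) ι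
  | _, .all φ, ι => ⨅ m : M, M0.val φ (fun o => o.elim m ι)
  | _, .ex φ, ι => ⨆ m : M, M0.val φ (fun o => o.elim m ι)

/-- The infinitary sequent calculus (for formulas in the logical symbols
`¬`, `⋀`, `∀`): axiom, cut, substitution, weakening, left/right negation,
left/right conjunction, left/right quantification (with the eigenvariable
condition), and the two equality rules. -/
inductive Deriv {Rsym : ℕ → Type} {C : Type} : Set (Fml Rsym C) → Set (Fml Rsym C) → Prop
  | ax (Γ Δ : Set (Fml Rsym C)) (φ : Fml Rsym C) : Deriv (insert φ Γ) (insert φ Δ)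
  | cut (Γ Γ' Δ Δ' : Set (Fml Rsym C)) (φ : Fml Rsym C) :
      Deriv (insert φ Γ) Δ → Deriv Γ' (insert φ Δ') → Deriv (Γ ∪ Γ') (Δ ∪ Δ')
  | substRule (Γ Δ : Set (Fml Rsym C)) (f : C → C) :
      Deriv Γ Δ → Deriv (Fml.rename f '' Γ) (Fml.rename f '' Δ)
  | weaken (Γ Γ' Δ Δ' : Set (Fml Rsym C)) : Deriv Γ Δ → Deriv (Γ ∪ Γ') (Δ ∪ Δ')
  | negL (Γ Δ : Set (Fml Rsym C)) (φ : Fml Rsym C) :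
      Deriv Γ (insert φ Δ) → Deriv (insert (.neg φ) Γ) Δ
  | negR (Γ Δ : Set (Fml Rsym C)) (φ : Fml Rsym C) :
      Deriv (insert φ Γ) Δ → Deriv Γ (insert (.neg φ) Δ)
  | conjL (Γ Δ : Set (Fml Rsym C)) {ι : Type} (g : ι → Fml Rsym C) :
      Deriv (Γ ∪ Set.range g) Δ → Deriv (insert (.conj g) Γ) Δ
  | conjR (Γ Δ : Set (Fml Rsym C)) {ι : Type} (g : ι → Fml Rsym C) :
      (∀ i, Deriv Γ (insert (g i) Δ)) → Deriv Γ (insert (.conj g) Δ)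
  | allL (Γ Δ : Set (Fml Rsym C)) (φ : Fml Rsym (Option C)) (c : C) :
      Deriv (insert (φ.subst c) Γ) Δ → Deriv (insert (.all φ) Γ) Δ
  | allR (Γ Δ : Set (Fml Rsym C)) (φ : Fml Rsym (Option C)) (c : C) :
      (∀ ψ ∈ Γ, ¬ Fml.occurs c ψ) → (∀ ψ ∈ Δ, ¬ Fml.occurs c ψ) →
      ¬ Fml.occurs c (Fml.all φ) →
      Deriv Γ (insert (φ.subst c) Δ) → Deriv Γ (insert (.all φ) Δ)
  | eq1 (a b : C) : Deriv {Fml.eq a b} {Fml.eq b a}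
  | eq2 {ι : Type} (u t : ι → C) (φ : Fml Rsym (ι ⊕ C)) :
      Deriv ({ψ | ∃ i, ψ = Fml.eq (u i) (t i)} ∪ {Fml.rename (Sum.elim t id) φ})
        {Fml.rename (Sum.elim u id) φ}

section Aux
variable {B : Type} [CompleteBooleanAlgebra B] {M : Type} {Rsym : ℕ → Type}

lemma BVModel.val_rename (M0 : BVModel B M Rsym) :
    ∀ {C : Type} (φ : Fml Rsym C) {D : Type} (f : C → D) (ι : D → M),
      M0.val (φ.rename f) ι = M0.val φ (ι ∘ f) := by
  intro C φ
  induction φ with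
  | eq a b => intro D f ι; rfl
  | rel r v => intro D f ι; rfl
  | neg φ ih => intro D f ι; exact congrArg compl (ih f ι)
  | conj g ih => intro D f ι; exact iInf_congr fun i => ih i f ι
  | disj g ih => intro D f ι; exact iSup_congr fun i => ih i f ι
  | all φ ih =>
      intro D f ι
      refine iInf_congr fun m => ?_
      rw [ih]; congr 1; funext o; cases o <;> rfl
  | ex φ ih =>
      intro D f ι
      refine iSup_congr fun m => ?_
      rw [ih]; congr 1; funext o; cases o <;> rfl

lemma BVModel.val_subst (M0 : BVModel B M Rsym) {C : Type} (φ : Fml Rsym (Option C))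
    (c : C) (ι : C → M) :
    M0.val (φ.subst c) ι = M0.val φ (fun o => o.elim (ι c) ι) := by
  rw [Fml.subst, M0.val_rename]; congr 1; funext o; cases o <;> rfl

lemma BVModel.val_congr (M0 : BVModel B M Rsym) :
    ∀ {C : Type} (φ : Fml Rsym C) (ι ι' : C → M),
      (∀ d, φ.occurs d → ι d = ι' d) → M0.val φ ι = M0.val φ ι' := by
  intro C φ
  induction φ with
  | eq a b => intro ι ι' h; exact congrArg₂ M0.eq (h a (Or.inl rfl)) (h b (Or.inr rfl))
  | rel r v =>
      intro ι ι' h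
      show M0.rel r (ι ∘ v) = M0.rel r (ι' ∘ v)
      congr 1; funext i; exact h (v i) ⟨i, rfl⟩
  | neg φ ih => intro ι ι' h; exact congrArg compl (ih ι ι' h)
  | conj g ih =>
      intro ι ι' h
      exact iInf_congr fun i => ih i ι ι' fun d hd => h d ⟨i, hd⟩
  | disj g ih =>
      intro ι ι' h
      exact iSup_congr fun i => ih i ι ι' fun d hd => h d ⟨i, hd⟩
  | all φ ih =>
      intro ι ι' h
      refine iInf_congr fun m => ih _ _ fun d hd => ?_
      cases d with
      | none => rfl
      | some d => exact h d hd
  | ex φ ih =>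
      intro ι ι' h
      refine iSup_congr fun m => ih _ _ fun d hd => ?_
      cases d with
      | none => rfl
      | some d => exact h d hd

lemma BVModel.val_eq_le (M0 : BVModel B M Rsym) :
    ∀ {C : Type} (φ : Fml Rsym C) (ι ι' : C → M),
      (⨅ c, M0.eq (ι c) (ι' c)) ⊓ M0.val φ ι ≤ M0.val φ ι' := by
  intro C φ
  induction φ with
  | eq a b =>
      intro ι ι'
      have h1 : (⨅ c, M0.eq (ι c) (ι' c)) ≤ M0.eq (ι' a) (ι a) := by
        rw [M0.symm]; exact iInf_le _ a
      have h2 : (⨅ c, M0.eq (ι c) (ι' c)) ≤ M0.eq (ι b) (ι' b) := iInf_le _ b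
      calc (⨅ c, M0.eq (ι c) (ι' c)) ⊓ M0.eq (ι a) (ι b)
          ≤ (M0.eq (ι' a) (ι a) ⊓ M0.eq (ι a) (ι b)) ⊓ M0.eq (ι b) (ι' b) := by
            refine le_inf (inf_le_inf_right _ h1) (le_trans inf_le_left h2)
        _ ≤ M0.eq (ι' a) (ι b) ⊓ M0.eq (ι b) (ι' b) :=
            inf_le_inf_right _ (M0.trans _ _ _)
        _ ≤ M0.eq (ι' a) (ι' b) := M0.trans _ _ _
  | rel r v =>
      intro ι ι'
      refine le_trans (inf_le_inf_right _ ?_) (M0.subst r (ι ∘ v) (ι' ∘ v))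
      exact Finset.le_inf fun i _ => iInf_le _ (v i)
  | neg φ ih =>
      intro ι ι'
      have key : (⨅ c, M0.eq (ι c) (ι' c)) ⊓ M0.val φ ι' ≤ M0.val φ ι := by
        have := ih ι' ι
        have he : (⨅ c, M0.eq (ι' c) (ι c)) = ⨅ c, M0.eq (ι c) (ι' c) := by
          exact iInf_congr fun c => M0.symm _ _
        rwa [he] at this
      show (⨅ c, M0.eq (ι c) (ι' c)) ⊓ (M0.val φ ι)ᶜ ≤ (M0.val φ ι')ᶜ
      rw [le_compl_iff_disjoint_right, disjoint_iff_inf_le]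
      calc (⨅ c, M0.eq (ι c) (ι' c)) ⊓ (M0.val φ ι)ᶜ ⊓ M0.val φ ι'
          ≤ ((⨅ c, M0.eq (ι c) (ι' c)) ⊓ M0.val φ ι') ⊓ (M0.val φ ι)ᶜ := by
            rw [inf_right_comm]
        _ ≤ M0.val φ ι ⊓ (M0.val φ ι)ᶜ := inf_le_inf_right _ key
        _ ≤ ⊥ := by rw [inf_compl_eq_bot]
  | conj g ih =>
      intro ι ι'
      refine le_iInf fun i => le_trans (inf_le_inf_left _ (iInf_le _ i)) (ih i ι ι')
  | disj g ih =>
      intro ι ι'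
      show (⨅ c, M0.eq (ι c) (ι' c)) ⊓ (⨆ i, M0.val (g i) ι) ≤ ⨆ i, M0.val (g i) ι'
      rw [inf_iSup_eq]
      exact iSup_le fun i => le_trans (ih i ι ι') (le_iSup (fun i => M0.val (g i) ι') i)
  | all φ ih =>
      intro ι ι'
      refine le_iInf fun m => ?_
      refine le_trans (inf_le_inf ?_ (iInf_le _ m))
        (ih (fun o => o.elim m ι) (fun o => o.elim m ι'))
      refine le_iInf fun o => ?_
      cases o with
      | none => show _ ≤ M0.eq m m; rw [M0.refl]; exact le_top
      | some c => exact iInf_le _ c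
  | ex φ ih =>
      intro ι ι'
      show (⨅ c, M0.eq (ι c) (ι' c)) ⊓ (⨆ m, _) ≤ ⨆ m, _
      rw [inf_iSup_eq]
      refine iSup_le fun m => ?_
      refine le_trans ?_ (le_iSup _ m)
      refine le_trans (inf_le_inf_left _ le_rfl) ?_
      refine le_trans (inf_le_inf ?_ le_rfl)
        (ih (fun o => o.elim m ι) (fun o => o.elim m ι'))
      refine le_iInf fun o => ?_
      cases o with
      | none => show _ ≤ M0.eq m m; rw [M0.refl]; exact le_top
      | some c => exact iInf_le _ c

end Aux
/-- Soundness of the infinitary sequent calculus for Boolean valued semantics: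
if `Γ ⊢ Δ` is derivable then in every Boolean valued model on a complete
Boolean algebra, `⟦⋀Γ⟧ ≤ ⟦⋁Δ⟧`. -/
theorem deriv_sound {Rsym : ℕ → Type} {C : Type} (Γ Δ : Set (Fml Rsym C))
    (h : Deriv Γ Δ) :
    ∀ (B : Type) [inst : CompleteBooleanAlgebra B] (M : Type)
      (M0 : BVModel B M Rsym) (ι : C → M),
      (⨅ φ ∈ Γ, M0.val φ ι) ≤ ⨆ φ ∈ Δ, M0.val φ ι := by
  induction h with
  | ax Γ Δ φ =>
      intro B _ M M0 ι
      simp only [iInf_insert, iSup_insert]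
      exact le_trans inf_le_left le_sup_left
  | cut Γ Γ' Δ Δ' φ h1 h2 ih1 ih2 =>
      intro B _ M M0 ι
      simp only [iInf_union, iSup_union, iInf_insert, iSup_insert] at *
      calc (⨅ ψ ∈ Γ, M0.val ψ ι) ⊓ ⨅ ψ ∈ Γ', M0.val ψ ι
          ≤ (⨅ ψ ∈ Γ, M0.val ψ ι) ⊓ (M0.val φ ι ⊔ ⨆ ψ ∈ Δ', M0.val ψ ι) :=
            inf_le_inf_left _ (ih2 B M M0 ι)
        _ = ((⨅ ψ ∈ Γ, M0.val ψ ι) ⊓ M0.val φ ι) ⊔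
              ((⨅ ψ ∈ Γ, M0.val ψ ι) ⊓ ⨆ ψ ∈ Δ', M0.val ψ ι) := inf_sup_left _ _ _
        _ ≤ (⨆ ψ ∈ Δ, M0.val ψ ι) ⊔ ⨆ ψ ∈ Δ', M0.val ψ ι := by
            refine sup_le_sup ?_ inf_le_right
            rw [inf_comm]; exact ih1 B M M0 ι
  | substRule Γ Δ f h ih =>
      intro B _ M M0 ι
      have hG : (⨅ φ ∈ Fml.rename f '' Γ, M0.val φ ι) = ⨅ φ ∈ Γ, M0.val φ (ι ∘ f) := by
        rw [iInf_image]
        exact iInf_congr fun ψ => iInf_congr fun _ => M0.val_rename ψ f ι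
      have hD : (⨆ φ ∈ Fml.rename f '' Δ, M0.val φ ι) = ⨆ φ ∈ Δ, M0.val φ (ι ∘ f) := by
        rw [iSup_image]
        exact iSup_congr fun ψ => iSup_congr fun _ => M0.val_rename ψ f ι
      rw [hG, hD]
      exact ih B M M0 (ι ∘ f)
  | weaken Γ Γ' Δ Δ' h ih =>
      intro B _ M M0 ι
      simp only [iInf_union, iSup_union]
      exact le_trans inf_le_left (le_trans (ih B M M0 ι) le_sup_left)
  | negL Γ Δ φ h ih =>
      intro B _ M M0 ι
      simp only [iInf_insert, iSup_insert] at *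
      have := ih B M M0 ι
      show (M0.val φ ι)ᶜ ⊓ _ ≤ _
      rw [inf_comm, ← sdiff_eq, sdiff_le_iff]
      exact this
  | negR Γ Δ φ h ih =>
      intro B _ M M0 ι
      simp only [iInf_insert, iSup_insert] at *
      have := ih B M M0 ι
      show _ ≤ (M0.val φ ι)ᶜ ⊔ _
      rw [inf_comm] at this
      rw [← sdiff_le_iff, sdiff_eq, compl_compl]
      exact this
  | conjL Γ Δ g h ih =>
      intro B _ M M0 ι
      simp only [iInf_insert, iInf_union, iInf_range] at *
      have := ih B M M0 ι
      rw [inf_comm]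
      convert this using 2
      rfl
  | conjR Γ Δ g h ih =>
      intro B _ M M0 ι
      simp only [iSup_insert] at *
      show _ ≤ (⨅ i, M0.val (g i) ι) ⊔ _
      rw [sup_comm, ← sdiff_le_iff]
      refine le_iInf fun i => ?_
      rw [sdiff_le_iff, ← sup_comm]
      exact ih i B M M0 ι
  | allL Γ Δ φ c h ih =>
      intro B _ M M0 ι
      simp only [iInf_insert] at *
      have := ih B M M0 ι
      rw [M0.val_subst] at this
      refine le_trans (inf_le_inf_right _ ?_) this
      show (⨅ m : M, M0.val φ fun o => o.elim m ι) ≤ _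
      exact iInf_le _ (ι c)
  | allR Γ Δ φ c hΓ hΔ hφ h ih =>
      intro B _ M M0 ι
      classical
      simp only [iSup_insert] at *
      show _ ≤ (⨅ m : M, M0.val φ fun o => o.elim m ι) ⊔ _
      rw [sup_comm, ← sdiff_le_iff]
      refine le_iInf fun m => ?_
      rw [sdiff_le_iff, ← sup_comm]
      set ι' : C → M := fun d => if d = c then m else ι d with hι'
      have hne : ∀ (ψ : Fml Rsym C), ¬ ψ.occurs c → M0.val ψ ι = M0.val ψ ι' := by
        intro ψ hocc
        refine M0.val_congr ψ ι ι' fun d hd => ?_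
        have : d ≠ c := fun hdc => hocc (hdc ▸ hd)
        simp [hι', this]
      have hG : (⨅ ψ ∈ Γ, M0.val ψ ι) = ⨅ ψ ∈ Γ, M0.val ψ ι' :=
        iInf_congr fun ψ => iInf_congr fun hψ => hne ψ (hΓ ψ hψ)
      have hD : (⨆ ψ ∈ Δ, M0.val ψ ι) = ⨆ ψ ∈ Δ, M0.val ψ ι' :=
        iSup_congr fun ψ => iSup_congr fun hψ => hne ψ (hΔ ψ hψ)
      have hval : M0.val (φ.subst c) ι' = M0.val φ fun o => o.elim m ι := by
        rw [M0.val_subst]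
        refine M0.val_congr φ _ _ fun d hd => ?_
        cases d with
        | none => show ι' c = m; simp [hι']
        | some d =>
            show ι' d = ι d
            have : d ≠ c := fun hdc => hφ (hdc ▸ hd)
            simp [hι', this]
      rw [hG, hD, ← hval]
      exact ih B M M0 ι'
  | eq1 a b =>
      intro B _ M M0 ι
      simp only [Set.mem_singleton_iff, iInf_iInf_eq_left, iSup_iSup_eq_left,
        iInf_singleton, iSup_singleton]
      show M0.eq (ι a) (ι b) ≤ M0.eq (ι b) (ι a)
      rw [M0.symm]
  | eq2 u t φ =>
      intro B _ M M0 ι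
      simp only [iInf_union, iSup_singleton, iInf_singleton]
      have hset : {ψ : Fml Rsym C | ∃ i, ψ = Fml.eq (u i) (t i)} = Set.range fun i => (Fml.eq (u i) (t i) : Fml Rsym C) := by
        ext ψ; simp [Set.range, eq_comm]
      rw [hset, iInf_range]
      have key := M0.val_eq_le φ (ι ∘ Sum.elim t id) (ι ∘ Sum.elim u id)
      rw [M0.val_rename, M0.val_rename]
      refine le_trans (inf_le_inf_right _ ?_) key
      refine le_iInf fun x => ?_
      cases x with
      | inl i =>
          show _ ≤ M0.eq (ι (t i)) (ι (u i))
          rw [M0.symm]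
          exact le_trans (iInf_le _ i) le_rfl
      | inr d =>
          show _ ≤ M0.eq (ι d) (ι d)
          rw [M0.refl]; exact le_top
end
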